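/- Let W ⊆ GL(V) be a finite group generated by pseudo-reflections whose reflection arrangement 𝒜 is essential. Then an element w ∈ W satisfies w(H) = H for every H ∈ 𝒜 if and only if w lies in the center Z(W) of W. (In other words, the kernel of the permutation action of W on 𝒜 is exactly Z(W).) -/

import Mathlib

/-! If `w` stabilises the fixed hyperplane `H` of a pseudo-reflection `s`, the commutator `⁅s, w⁆`
fixes `H` pointwise and acts trivially on the line `V ⧸ H`, so it is unipotent; having finite order
in characteristic zero, it is the identity. Thus `w` commutes with the pseudo-reflections of `W`,
which generate `W`. Conversely, if `w` commutes with `s` it preserves `ker (s - 1)`. -/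

/-- `s` is a pseudo-reflection: an automorphism of finite order whose fixed subspace
`ker (s - 1)` is a hyperplane (the kernel of some nonzero linear form). -/
def IsPseudoReflection {V : Type*} [AddCommGroup V] [Module ℂ V] (s : V ≃ₗ[ℂ] V) : Prop :=
  IsOfFinOrder s ∧ ∃ f : V →ₗ[ℂ] ℂ, f ≠ 0 ∧
    LinearMap.ker f = LinearMap.ker ((s : V →ₗ[ℂ] V) - LinearMap.id)

/-- The reflection arrangement of `W`: the set of hyperplanes `ker (s - 1)` for `s` a
pseudo-reflection in `W`. -/
def reflArrangement {V : Type*} [AddCommGroup V] [Module ℂ V] (W : Subgroup (V ≃ₗ[ℂ] V)) :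
    Set (Submodule ℂ V) :=
  {H | ∃ s ∈ W, IsPseudoReflection s ∧ LinearMap.ker ((s : V →ₗ[ℂ] V) - LinearMap.id) = H}

open LinearMap Submodule
open scoped commutatorElement

section
variable {K V : Type*} [Field K] [AddCommGroup V] [Module K V]

theorem LinearMap.exists_comp_eq_smul_of_map_ker_le {f : V →ₗ[K] K} {u : V →ₗ[K] V}
    (hu : (ker f).map u ≤ ker f) : ∃ c : K, f ∘ₗ u = c • f := by
  have hle : ⨅ _ : Unit, ker f ≤ ker (f ∘ₗ u) := by
    rw [iInf_const, ker_comp, ← map_le_iff_le_comap]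
    exact hu
  obtain ⟨c, hc⟩ := mem_span_singleton.mp (by simpa using mem_span_of_iInf_ker_le_ker hle)
  exact ⟨c, hc.symm⟩

theorem LinearEquiv.map_inv_eq_of_map_eq {H : Submodule K V} {u : V ≃ₗ[K] V}
    (hu : H.map (u : V →ₗ[K] V) = H) : H.map ((u⁻¹ : V ≃ₗ[K] V) : V →ₗ[K] V) = H := by
  rw [map_equiv_eq_comap_symm]
  change H.comap (u : V →ₗ[K] V) = H
  conv_lhs => rw [← hu]
  exact comap_map_eq_of_injective u.injective H

/-- `u` and `w` act on the line `V ⧸ ker f` by scalars, and scalars commute. -/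
theorem LinearMap.apply_commutatorElement_of_map_ker_eq {f : V →ₗ[K] K} {u w : V ≃ₗ[K] V}
    (hu : (ker f).map (u : V →ₗ[K] V) = ker f) (hw : (ker f).map (w : V →ₗ[K] V) = ker f)
    (v : V) : f (⁅u, w⁆ v) = f v := by
  have scalar : ∀ g : V ≃ₗ[K] V, (ker f).map (g : V →ₗ[K] V) = ker f →
      ∃ c : K, ∀ v, f (g v) = c * f v := fun g hg => by
    obtain ⟨c, hc⟩ := exists_comp_eq_smul_of_map_ker_le hg.le
    exact ⟨c, fun v => LinearMap.congr_fun hc v⟩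
  obtain ⟨a, ha⟩ := scalar u hu
  obtain ⟨a', ha'⟩ := scalar u⁻¹ (LinearEquiv.map_inv_eq_of_map_eq hu)
  obtain ⟨b, hb⟩ := scalar w hw
  obtain ⟨b', hb'⟩ := scalar w⁻¹ (LinearEquiv.map_inv_eq_of_map_eq hw)
  have haa' : ∀ x, a * (a' * f x) = f x := fun x => by
    rw [← ha', ← ha]; simp
  have hbb' : ∀ x, b * (b' * f x) = f x := fun x => by
    rw [← hb', ← hb]; simp
  calc f (⁅u, w⁆ v) = a * (b * (a' * (b' * f v))) := by
        change f (u (w (u⁻¹ (w⁻¹ v)))) = _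
        rw [ha, hb, ha', hb']
    _ = a * (a' * (b * (b' * f v))) := by ring
    _ = f v := by rw [hbb', haa']

theorem LinearEquiv.eq_one_of_isOfFinOrder_of_apply_sub_self [CharZero K] {g : V ≃ₗ[K] V}
    (hg : IsOfFinOrder g) (h : ∀ v, g (g v - v) = g v - v) : g = 1 := by
  obtain ⟨n, hn, hgn⟩ := hg.exists_pow_eq_one
  have hpow : ∀ (k : ℕ) v, (g ^ k) v = v + (k : K) • (g v - v) := by
    intro k v
    induction k with
    | zero => simp
    | succ k ih =>
      rw [pow_succ', LinearEquiv.mul_apply, ih, map_add, map_smul, h]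
      push_cast
      module
  ext v
  have := hpow n v
  rw [hgn] at this
  have : g v - v = 0 := by simpa [hn.ne'] using this
  simpa [sub_eq_zero] using this

theorem LinearEquiv.map_ker_sub_id_eq_of_commute {s w : V ≃ₗ[K] V} (h : Commute s w) :
    (ker ((s : V →ₗ[K] V) - LinearMap.id)).map (w : V →ₗ[K] V) =
      ker ((s : V →ₗ[K] V) - LinearMap.id) := by
  have mem_iff : ∀ x, x ∈ ker ((s : V →ₗ[K] V) - LinearMap.id) ↔ s x = x := by
    simp [sub_eq_zero]
  ext x
  simp only [mem_map, mem_iff]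
  constructor
  · rintro ⟨y, hy, rfl⟩
    change (s * w) y = w y
    rw [h.eq]
    exact congrArg w hy
  · intro hx
    refine ⟨w⁻¹ x, ?_, by simp⟩
    change (s * w⁻¹) x = w⁻¹ x
    rw [h.inv_right.eq]
    exact congrArg (w⁻¹ : V ≃ₗ[K] V) hx

theorem commute_of_le_ker_sub_id_of_map_ker_eq [CharZero K] {f : V →ₗ[K] K} {s w : V ≃ₗ[K] V}
    (hs : ker f ≤ ker ((s : V →ₗ[K] V) - LinearMap.id))
    (hw : (ker f).map (w : V →ₗ[K] V) = ker f) (hfin : IsOfFinOrder ⁅s, w⁆) : Commute s w := by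
  have hs_fix : ∀ x ∈ ker f, s x = x := fun x hx => by
    simpa [sub_eq_zero] using hs hx
  have hs_map : (ker f).map (s : V →ₗ[K] V) = ker f := by
    refine le_antisymm ?_ fun x hx => ⟨x, hx, hs_fix x hx⟩
    rintro _ ⟨x, hx, rfl⟩
    rwa [LinearEquiv.coe_coe, hs_fix x hx]
  have hcomm_fix : ∀ x ∈ ker f, ⁅s, w⁆ x = x := fun x hx => by
    have hw' : w⁻¹ x ∈ ker f := by
      rw [← LinearEquiv.map_inv_eq_of_map_eq hw]
      exact mem_map_of_mem hx
    have hs' : s⁻¹ (w⁻¹ x) = w⁻¹ x := by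
      conv_lhs => rw [← hs_fix _ hw']
      simp
    change s (w (s⁻¹ (w⁻¹ x))) = x
    rw [hs', show w (w⁻¹ x) = x by simp, hs_fix x hx]
  refine commutatorElement_eq_one_iff_commute.mp
    (LinearEquiv.eq_one_of_isOfFinOrder_of_apply_sub_self hfin fun v => hcomm_fix _ ?_)
  rw [mem_ker, map_sub, apply_commutatorElement_of_map_ker_eq hs_map hw, sub_self]

end

theorem IsPseudoReflection.commute_of_map_ker_eq {V : Type*} [AddCommGroup V] [Module ℂ V]
    {s w : V ≃ₗ[ℂ] V} (hs : IsPseudoReflection s)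
    (hw : (ker ((s : V →ₗ[ℂ] V) - LinearMap.id)).map (w : V →ₗ[ℂ] V) =
      ker ((s : V →ₗ[ℂ] V) - LinearMap.id))
    (hfin : IsOfFinOrder ⁅s, w⁆) : Commute s w := by
  obtain ⟨-, f, -, hf⟩ := hs
  rw [← hf] at hw
  exact commute_of_le_ker_sub_id_of_map_ker_eq hf.le hw hfin

theorem stmt_14_general {V : Type*} [AddCommGroup V] [Module ℂ V]
    (W : Subgroup (V ≃ₗ[ℂ] V)) (hfin : (W : Set (V ≃ₗ[ℂ] V)).Finite)
    (hgen : W = Subgroup.closure {s : V ≃ₗ[ℂ] V | s ∈ W ∧ IsPseudoReflection s}) :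
    ∀ w ∈ W,
      ((∀ H ∈ reflArrangement W, Submodule.map (w : V →ₗ[ℂ] V) H = H) ↔
        ∀ v ∈ W, v * w = w * v) := by
  intro w hw
  have : Finite W := hfin.to_subtype
  constructor
  · intro hfix v hv
    suffices W ≤ Subgroup.centralizer {w} from Subgroup.mem_centralizer_singleton_iff.mp (this hv)
    rw [hgen, Subgroup.closure_le]
    rintro s ⟨hsW, hs⟩
    have hcomm_mem : ⁅s, w⁆ ∈ W :=
      W.mul_mem (W.mul_mem (W.mul_mem hsW hw) (W.inv_mem hsW)) (W.inv_mem hw)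
    have hcomm_fin : IsOfFinOrder ⁅s, w⁆ :=
      Submonoid.isOfFinOrder_coe.mpr (isOfFinOrder_of_finite (⟨_, hcomm_mem⟩ : W))
    exact Subgroup.mem_centralizer_singleton_iff.mpr
      (hs.commute_of_map_ker_eq (hfix _ ⟨s, hsW, hs, rfl⟩) hcomm_fin).eq
  · rintro hcen _ ⟨s, hsW, -, rfl⟩
    exact LinearEquiv.map_ker_sub_id_eq_of_commute (hcen s hsW)

/-- For a finite pseudo-reflection group `W` with essential reflection
arrangement `𝒜`, an element `w ∈ W` fixes every `H ∈ 𝒜` (setwise) if and only if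
`w` is central in `W`: the kernel of the permutation action of `W` on `𝒜` is
exactly `Z(W)`. -/
theorem stmt_14 {V : Type*} [AddCommGroup V] [Module ℂ V] [FiniteDimensional ℂ V]
    (W : Subgroup (V ≃ₗ[ℂ] V)) (hfin : (W : Set (V ≃ₗ[ℂ] V)).Finite)
    (hgen : W = Subgroup.closure {s : V ≃ₗ[ℂ] V | s ∈ W ∧ IsPseudoReflection s})
    (hess : sInf (reflArrangement W) = (⊥ : Submodule ℂ V)) :
    ∀ w ∈ W,
      ((∀ H ∈ reflArrangement W, Submodule.map (w : V →ₗ[ℂ] V) H = H) ↔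
        ∀ v ∈ W, v * w = w * v) :=
  stmt_14_general W hfin hgen
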